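/- arXiv:1211.0863 — 3 statements merged into one kernel-verified Lean document; each statement's English description precedes it below -/
import Mathlib

section
/- The probability space 𝕋 with Haar measure is isomorphic (as a measure space) to the one-sided Bernoulli shift space ∏_{n ∈ ℤ₋} {0,1,…,k−1} with the uniform product measure, via the map sending (x_n)_{n ∈ ℤ₋} to exp(2πi Σ_{n ∈ ℤ₋} x_n k^n); moreover, under this isomorphism the preimage of a set under T_k corresponds to the shift of the set. -/
/-!
Write `t = ∑ xₙ k^{-(n+1)}` for the point of `[0, 1]` with digits `x`. The first `N` digits
determine `t` up to an interval of length `k^{-N}`, and each of the `k^N` possible prefixes has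
mass `k^{-N}`; squeezing gives `P (t ≤ s) = s`, so `x ↦ t` carries `P` to Lebesgue measure on
`[0, 1]`, and then `t ↦ exp (2πit)` carries it to a rotation invariant probability measure, which
is Haar measure by uniqueness. Reading off digits, `t ↦ (⌊k^{n+1} t⌋ mod k)ₙ`, inverts the map
except on sequences ending in `(k-1)^∞`, a `P`-null set. Finally `k t = x₀ + t'`, where `t'` has
the shifted digits, and `exp (2πi ·)` does not see the integer `x₀`.
-/

open MeasureTheory

noncomputable instance : MeasurableSpace Circle := borel Circle

instance : BorelSpace Circle := ⟨rfl⟩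

open Filter Set
open scoped ENNReal

namespace Real

variable {b : ℕ}

/-- The natural number with base-`b` digits `x 0, …, x (N - 1)`, most significant first. -/
def prefixValue (x : ℕ → Fin b) : ℕ → ℕ
  | 0 => 0
  | N + 1 => b * prefixValue x N + x N

theorem measurable_prefixValue (N : ℕ) : Measurable (prefixValue (b := b) · N) := by
  induction N with
  | zero => exact measurable_const
  | succ N ih =>
    simp only [prefixValue]
    fun_prop

theorem exists_setOf_prefixValue_eq (hb : 0 < b) :
    ∀ {N c : ℕ}, c < b ^ N → ∃ a : ℕ → Fin b,
      {x : ℕ → Fin b | prefixValue x N = c} = {x | ∀ n ∈ Finset.range N, x n = a n}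
  | 0, c, hc => ⟨fun _ ↦ ⟨0, hb⟩, by simp_all [prefixValue]⟩
  | N + 1, c, hc => by
    obtain ⟨a, ha⟩ := exists_setOf_prefixValue_eq hb (N := N) (c := c / b)
      (Nat.div_lt_of_lt_mul (by rwa [pow_succ, mul_comm] at hc))
    refine ⟨Function.update a N ⟨c % b, Nat.mod_lt c hb⟩, Set.ext fun x ↦ ?_⟩
    have hprefix : prefixValue x N = c / b ↔ ∀ n ∈ Finset.range N, x n = a n :=
      Set.ext_iff.mp ha x
    have hsplit : prefixValue x (N + 1) = c ↔ prefixValue x N = c / b ∧ (x N : ℕ) = c % b := by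
      rw [prefixValue, eq_comm (a := prefixValue x N), eq_comm (a := (x N : ℕ)),
        Nat.div_mod_unique hb, add_comm]
      simp [(x N).isLt]
    simp only [Set.mem_ofPred_eq, hsplit, hprefix, Finset.range_add_one, Finset.forall_mem_insert,
      Function.update_self, Fin.ext_iff, and_comm]
    refine and_congr_right' (forall₂_congr fun n hn ↦ ?_)
    rw [Function.update_of_ne (Finset.mem_range.mp hn).ne]

theorem pow_mul_sum_ofDigitsTerm (x : ℕ → Fin b) (N : ℕ) :
    (b : ℝ) ^ N * ∑ i ∈ Finset.range N, ofDigitsTerm x i = prefixValue x N := by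
  induction N with
  | zero => simp [prefixValue]
  | succ N ih =>
    have hb : (b : ℝ) ≠ 0 := by exact_mod_cast (Fin.pos (x 0)).ne'
    rw [Finset.sum_range_succ, prefixValue, ofDigitsTerm, mul_add, pow_succ', mul_assoc, ih]
    push_cast
    field_simp

theorem pow_mul_ofDigits (x : ℕ → Fin b) (N : ℕ) :
    (b : ℝ) ^ N * ofDigits x = prefixValue x N + ofDigits (fun i ↦ x (i + N)) := by
  have hb : (b : ℝ) ≠ 0 := by exact_mod_cast (Fin.pos (x 0)).ne'
  rw [ofDigits_eq_sum_add_ofDigits x N, mul_add, pow_mul_sum_ofDigitsTerm, ← mul_assoc,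
    mul_inv_cancel₀ (pow_ne_zero _ hb), one_mul]

theorem prefixValue_le_pow_mul_ofDigits (x : ℕ → Fin b) (N : ℕ) :
    (prefixValue x N : ℝ) ≤ b ^ N * ofDigits x := by
  rw [pow_mul_ofDigits]
  linarith [ofDigits_nonneg (fun i ↦ x (i + N))]

theorem pow_mul_ofDigits_le_prefixValue_add_one (x : ℕ → Fin b) (N : ℕ) :
    b ^ N * ofDigits x ≤ prefixValue x N + 1 := by
  rw [pow_mul_ofDigits]
  linarith [ofDigits_le_one (fun i ↦ x (i + N))]

theorem ofDigits_lt_one {x : ℕ → Fin b} (h : ∃ n, (x n : ℕ) < b - 1) : ofDigits x < 1 := by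
  obtain ⟨n, hn⟩ := h
  have hb : 1 < b := by omega
  rw [← ofDigits_const_last_eq_one' hb]
  have hlast : ∀ i, ofDigitsTerm (fun _ ↦ (⟨b - 1, by omega⟩ : Fin b)) i
      = (b - 1) * ((b : ℝ) ^ (i + 1))⁻¹ := fun i ↦ by
    simp [ofDigitsTerm, Nat.cast_sub hb.le]
  refine Summable.tsum_lt_tsum (i := n) (fun i ↦ ?_) ?_ summable_ofDigitsTerm summable_ofDigitsTerm
  · exact hlast i ▸ ofDigitsTerm_le
  · rw [hlast, ofDigitsTerm]
    gcongr
    rw [lt_sub_iff_add_lt]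
    exact_mod_cast (by omega : (x n : ℕ) + 1 < b)

theorem floor_ofDigits_mul_pow {x : ℕ → Fin b} {N : ℕ} (h : ∃ n ≥ N, (x n : ℕ) < b - 1) :
    ⌊ofDigits x * b ^ N⌋₊ = prefixValue x N := by
  obtain ⟨n, hNn, hn⟩ := h
  have htail : ofDigits (fun i ↦ x (i + N)) < 1 :=
    ofDigits_lt_one ⟨n - N, by rwa [Nat.sub_add_cancel hNn]⟩
  rw [Nat.floor_eq_iff (by positivity [ofDigits_nonneg x]), mul_comm, pow_mul_ofDigits]
  constructor <;> linarith [ofDigits_nonneg (fun i ↦ x (i + N))]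

theorem digits_ofDigits [NeZero b] {x : ℕ → Fin b} (h : ∃ᶠ n in atTop, (x n : ℕ) < b - 1) :
    digits (ofDigits x) b = x := by
  funext n
  obtain ⟨m, hm, hxm⟩ := frequently_atTop.mp h (n + 1)
  rw [digits, floor_ofDigits_mul_pow ⟨m, hm, hxm⟩, prefixValue]
  ext
  simp [Nat.mod_eq_of_lt (x n).isLt]

theorem measurable_digits [NeZero b] : Measurable (digits · b) := by
  unfold digits
  fun_prop

end Real

variable {k : ℕ}

def IsUniformBernoulli (P : Measure (ℕ → Fin k)) : Prop :=
  ∀ (s : Finset ℕ) (a : ℕ → Fin k), P {x | ∀ n ∈ s, x n = a n} = (k : ℝ≥0∞)⁻¹ ^ s.card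

namespace IsUniformBernoulli

open Real

variable {P : Measure (ℕ → Fin k)}

theorem measure_setOf_eventually_eq (hP : IsUniformBernoulli P) (hk : 1 < k) (a : ℕ → Fin k) :
    P {x | ∀ᶠ n in atTop, x n = a n} = 0 := by
  have hk' : (k : ℝ≥0∞)⁻¹ < 1 := ENNReal.inv_lt_one.mpr (by exact_mod_cast hk)
  simp only [eventually_atTop, ofPred_exists]
  refine measure_iUnion_null fun N ↦ nonpos_iff_eq_zero.mp
    (ge_of_tendsto' (ENNReal.tendsto_pow_atTop_nhds_zero_of_lt_one hk') fun j ↦ ?_)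
  calc P {x | ∀ n ≥ N, x n = a n}
      ≤ P {x | ∀ n ∈ Finset.Ico N (N + j), x n = a n} :=
        measure_mono fun x hx n hn ↦ hx n (Finset.mem_Ico.mp hn).1
    _ = (k : ℝ≥0∞)⁻¹ ^ j := by rw [hP, Nat.card_Ico, Nat.add_sub_cancel_left]

theorem ae_frequently_lt (hP : IsUniformBernoulli P) (hk : 1 < k) :
    ∀ᵐ x ∂P, ∃ᶠ n in atTop, (x n : ℕ) < k - 1 := by
  refine measure_mono_null (fun x hx ↦ ?_)
    (hP.measure_setOf_eventually_eq hk fun _ ↦ ⟨k - 1, by omega⟩)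
  refine (not_frequently.mp hx).mono fun n hn ↦ Fin.ext ?_
  have := (x n).isLt
  simp only at hn ⊢
  omega

theorem measure_setOf_prefixValue_lt (hP : IsUniformBernoulli P) (hk : 0 < k) {N j : ℕ}
    (hj : j ≤ k ^ N) : P {x | prefixValue x N < j} = j * (k : ℝ≥0∞)⁻¹ ^ N := by
  have hfiber : ∀ c ∈ Finset.range j, P {x | prefixValue x N = c} = (k : ℝ≥0∞)⁻¹ ^ N := by
    intro c hc
    obtain ⟨a, ha⟩ := exists_setOf_prefixValue_eq hk ((Finset.mem_range.mp hc).trans_le hj)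
    rw [ha, hP, Finset.card_range]
  have hunion : {x : ℕ → Fin k | prefixValue x N < j} =
      ⋃ c ∈ Finset.range j, {x | prefixValue x N = c} := by
    ext x
    simp
  have hmeas : ∀ c ∈ Finset.range j, MeasurableSet {x : ℕ → Fin k | prefixValue x N = c} :=
    fun c _ ↦ measurable_prefixValue N (measurableSet_singleton c)
  rw [hunion, measure_biUnion_finset (fun c _ c' _ hcc' ↦ Set.disjoint_left.mpr fun x hx hx' ↦
      hcc' (hx.symm.trans hx')) hmeas,
    Finset.sum_congr rfl hfiber, Finset.sum_const, Finset.card_range, nsmul_eq_mul]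

theorem measure_setOf_ofDigits_le (hP : IsUniformBernoulli P) (hk : 1 < k) [IsFiniteMeasure P]
    {t : ℝ} (ht : t ∈ Ico 0 1) : P {x | ofDigits x ≤ t} = ENNReal.ofReal t := by
  have hk0 : 0 < k := by omega
  suffices h : ∀ N : ℕ, |(P {x | ofDigits x ≤ t}).toReal - t| ≤ ((k : ℝ) ^ N)⁻¹ by
    have hlim : Tendsto (fun N : ℕ ↦ ((k : ℝ) ^ N)⁻¹) atTop (nhds 0) :=
      tendsto_inv_atTop_zero.comp (tendsto_pow_atTop_atTop_of_one_lt (by exact_mod_cast hk))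
    rw [← ENNReal.ofReal_toReal (measure_ne_top P _),
      sub_eq_zero.mp (abs_nonpos_iff.mp (ge_of_tendsto' hlim h))]
  intro N
  have hkN : (0 : ℝ) < (k : ℝ) ^ N := by positivity
  set j := ⌊t * (k : ℝ) ^ N⌋₊
  have hjt : (j : ℝ) ≤ t * k ^ N := Nat.floor_le (by positivity [ht.1])
  have htj : t * k ^ N < j + 1 := Nat.lt_floor_add_one _
  have hjk : j + 1 ≤ k ^ N := by
    have : (j : ℝ) < (k ^ N : ℕ) := by push_cast; nlinarith [ht.2]
    exact_mod_cast this
  have hmeasure : ∀ i ≤ j + 1, (P {x | prefixValue x N < i}).toReal = i * ((k : ℝ) ^ N)⁻¹ := by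
    intro i hi
    rw [measure_setOf_prefixValue_lt hP hk0 (hi.trans hjk)]
    simp
  have hlower : (j : ℝ) * ((k : ℝ) ^ N)⁻¹ ≤ (P {x | ofDigits x ≤ t}).toReal := by
    rw [← hmeasure j j.le_succ]
    refine measureReal_mono fun x (hx : prefixValue x N < j) ↦ ?_
    have hx' : (prefixValue x N : ℝ) + 1 ≤ j := by exact_mod_cast hx
    refine le_of_mul_le_mul_right ?_ hkN
    linarith [pow_mul_ofDigits_le_prefixValue_add_one x N]
  have hupper : (P {x | ofDigits x ≤ t}).toReal ≤ (j + 1 : ℕ) * ((k : ℝ) ^ N)⁻¹ := by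
    rw [← hmeasure (j + 1) le_rfl]
    refine measureReal_mono fun x (hx : ofDigits x ≤ t) ↦ ?_
    have : (prefixValue x N : ℝ) < j + 1 := by
      nlinarith [prefixValue_le_pow_mul_ofDigits x N]
    exact_mod_cast this
  have hjt' : (j : ℝ) * ((k : ℝ) ^ N)⁻¹ ≤ t := by
    rw [← div_eq_mul_inv, div_le_iff₀ hkN]; linarith
  have htj' : t ≤ (j + 1) * ((k : ℝ) ^ N)⁻¹ := by
    rw [← div_eq_mul_inv, le_div_iff₀ hkN]; linarith
  push_cast at hupper
  rw [abs_sub_le_iff]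
  constructor <;> linarith

theorem measurePreserving_ofDigits (hP : IsUniformBernoulli P) (hk : 1 < k)
    [IsProbabilityMeasure P] : MeasurePreserving ofDigits P (volume.restrict (Ioc 0 1)) := by
  refine ⟨continuous_ofDigits.measurable, Measure.ext_of_Iic _ _ fun t ↦ ?_⟩
  rw [Measure.map_apply continuous_ofDigits.measurable measurableSet_Iic,
    Measure.restrict_apply measurableSet_Iic]
  rcases lt_or_ge t 0 with ht | ht
  · have hempty : @ofDigits k ⁻¹' Iic t = ∅ :=
      eq_empty_of_forall_notMem fun x hx ↦ (ofDigits_nonneg x).not_gt (lt_of_le_of_lt hx ht)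
    rw [hempty, Iic_inter_Ioc_of_le (ht.trans zero_lt_one).le]
    simp [ht.le]
  rcases lt_or_ge t 1 with ht1 | ht1
  · rw [Iic_inter_Ioc_of_le ht1.le, Real.volume_Ioc, sub_zero]
    exact measure_setOf_ofDigits_le hP hk ⟨ht, ht1⟩
  · have huniv : @ofDigits k ⁻¹' Iic t = univ :=
      eq_univ_of_forall fun x ↦ (ofDigits_le_one x).trans ht1
    rw [huniv, inter_eq_right.mpr (Ioc_subset_Iic_self.trans (Iic_subset_Iic.mpr ht1))]
    simp

end IsUniformBernoulli

theorem MeasureTheory.Measure.eq_of_isMulLeftInvariant_of_isProbabilityMeasure {G : Type*}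
    [Group G] [TopologicalSpace G] [IsTopologicalGroup G] [LocallyCompactSpace G]
    [SecondCountableTopology G] [MeasurableSpace G] [BorelSpace G]
    (μ' μ : Measure G) [μ.IsHaarMeasure] [IsProbabilityMeasure μ] [IsProbabilityMeasure μ']
    [μ'.IsMulLeftInvariant] : μ' = μ := by
  have h := isMulLeftInvariant_eq_smul μ' μ
  have hc := congrArg (fun m : Measure G ↦ m univ) h
  rw [measure_univ, Measure.smul_apply, measure_univ, ENNReal.smul_def, smul_eq_mul, mul_one,
    eq_comm, ENNReal.coe_eq_one] at hc
  rw [h, hc, one_smul]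

theorem AddCircle.measurePreserving_toCircle {T : ℝ} [Fact (0 < T)]
    (ν : Measure (AddCircle T)) [ν.IsAddHaarMeasure] [IsProbabilityMeasure ν]
    (μ : Measure Circle) [μ.IsHaarMeasure] [IsProbabilityMeasure μ] :
    MeasurePreserving toCircle ν μ := by
  have hmeas : Measurable (toCircle : AddCircle T → Circle) := continuous_toCircle.measurable
  refine ⟨hmeas, ?_⟩
  have : IsProbabilityMeasure (ν.map toCircle) :=
    Measure.isProbabilityMeasure_map hmeas.aemeasurable
  have : (ν.map toCircle).IsMulLeftInvariant := by
    refine ⟨fun c ↦ ?_⟩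
    obtain ⟨y, rfl⟩ : ∃ y, toCircle y = c := by
      obtain ⟨y, hy⟩ := (homeomorphCircle (Fact.out : 0 < T).ne').surjective c
      exact ⟨y, by rwa [homeomorphCircle_apply] at hy⟩
    have hcomm : (toCircle y * ·) ∘ toCircle = toCircle ∘ (y + ·) := by
      funext z
      simp [toCircle_add]
    rw [Measure.map_map (measurable_const_mul _) hmeas, hcomm,
      ← Measure.map_map hmeas (measurable_const_add y), (measurePreserving_add_left ν y).map_eq]
  exact Measure.eq_of_isMulLeftInvariant_of_isProbabilityMeasure _ μ

namespace Circle

variable {b : ℕ}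

noncomputable def ofDigits (x : ℕ → Fin b) : Circle :=
  AddCircle.toCircle (Real.ofDigits x : UnitAddCircle)

/-- Writing `z = exp (2πit)` with `t ∈ [0, 1)`, the base-`b` digits of `t`. -/
noncomputable def digits (z : Circle) (b : ℕ) [NeZero b] : ℕ → Fin b :=
  Real.digits (AddCircle.equivIco 1 0 ((AddCircle.homeomorphCircle one_ne_zero).symm z)) b

theorem ofDigits_eq_exp (x : ℕ → Fin b) : ofDigits x = exp (2 * Real.pi * Real.ofDigits x) := by
  rw [ofDigits, AddCircle.toCircle_apply_mk, div_one]

theorem ofDigits_pow (x : ℕ → Fin b) : ofDigits x ^ b = ofDigits (fun i ↦ x (i + 1)) := by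
  have hshift := Real.pow_mul_ofDigits x 1
  rw [pow_one, Real.prefixValue, Real.prefixValue, mul_zero, zero_add] at hshift
  rw [ofDigits, ← AddCircle.toCircle_nsmul, ← AddCircle.coe_nsmul, nsmul_eq_mul, hshift,
    AddCircle.coe_add, (AddCircle.coe_eq_zero_iff 1).mpr ⟨x 0, by simp⟩, zero_add, ofDigits]

theorem measurable_digits [NeZero b] : Measurable (digits · b) :=
  Real.measurable_digits.comp <| measurable_subtype_coe.comp <|
    (AddCircle.measurableEquivIco 1 0).measurable.comp
      (AddCircle.homeomorphCircle one_ne_zero).symm.continuous.measurable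

theorem ofDigits_digits [NeZero b] (hb : 1 < b) (z : Circle) : ofDigits (digits z b) = z := by
  set e := AddCircle.homeomorphCircle (T := 1) one_ne_zero
  have hrep : (AddCircle.equivIco 1 0 (e.symm z) : ℝ) ∈ Ico 0 1 := by
    simpa using (AddCircle.equivIco 1 0 (e.symm z)).2
  rw [ofDigits, digits, Real.ofDigits_digits hb hrep, AddCircle.coe_equivIco,
    ← AddCircle.homeomorphCircle_apply one_ne_zero, e.apply_symm_apply]

theorem digits_ofDigits [NeZero b] {x : ℕ → Fin b} (hx : ∃ᶠ n in atTop, (x n : ℕ) < b - 1) :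
    digits (ofDigits x) b = x := by
  have hrep : Real.ofDigits x ∈ Ico 0 (0 + 1) :=
    ⟨Real.ofDigits_nonneg x, (zero_add (1 : ℝ)).symm ▸ Real.ofDigits_lt_one hx.exists⟩
  rw [digits, ofDigits, ← AddCircle.homeomorphCircle_apply one_ne_zero,
    Homeomorph.symm_apply_apply, AddCircle.equivIco_coe_of_mem hrep, Real.digits_ofDigits hx]

theorem measurePreserving_ofDigits {P : Measure (ℕ → Fin b)} (hP : IsUniformBernoulli P)
    (hb : 1 < b) [IsProbabilityMeasure P] (μ : Measure Circle) [μ.IsHaarMeasure]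
    [IsProbabilityMeasure μ] : MeasurePreserving ofDigits P μ := by
  have hmk : MeasurePreserving ((↑) : ℝ → UnitAddCircle) (volume.restrict (Ioc 0 1)) volume := by
    simpa using UnitAddCircle.measurePreserving_mk 0
  have : IsProbabilityMeasure (volume : Measure UnitAddCircle) := ⟨UnitAddCircle.measure_univ⟩
  exact ((AddCircle.measurePreserving_toCircle (volume : Measure UnitAddCircle) μ).comp
    (hmk.comp (hP.measurePreserving_ofDigits hb)) :)

end Circle

/-- The circle with normalized Haar measure is isomorphic, as a measure space, to the
one-sided Bernoulli shift space `∏_{n ∈ ℤ₋} {0, 1, …, k-1}` (indexed here by `n : ℕ`,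
with `n` corresponding to the negative integer `-(n+1)`) with the uniform product
measure (characterized by its values on cylinder sets), via the map
`(x_n)_n ↦ exp(2πi ∑_n x_n k^{-(n+1)})`; moreover, under this map the preimage of a set
under `T_k : z ↦ z ^ k` corresponds to the shift of the set. -/
theorem circle_iso_bernoulli_shift (k : ℕ) (hk : 2 ≤ k)
    (μ : Measure Circle) [μ.IsHaarMeasure] [IsProbabilityMeasure μ]
    (P : Measure (ℕ → Fin k)) [IsProbabilityMeasure P]
    (hP : ∀ (s : Finset ℕ) (a : ℕ → Fin k),
      P {x | ∀ n ∈ s, x n = a n} = ((k : ENNReal)⁻¹) ^ s.card)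
    (f : (ℕ → Fin k) → Circle)
    (hf : f = fun x => Circle.exp (2 * Real.pi * ∑' n : ℕ, (x n : ℝ) * (k : ℝ)⁻¹ ^ (n + 1))) :
    MeasurePreserving f P μ ∧
      (∃ g : Circle → ℕ → Fin k, Measurable g ∧
        (∀ᵐ x ∂P, g (f x) = x) ∧ (∀ᵐ z ∂μ, f (g z) = z)) ∧
      (∀ x : ℕ → Fin k, f x ^ k = f (fun n => x (n + 1))) ∧
      (∀ A : Set Circle, MeasurableSet A →
        f ⁻¹' ((fun z : Circle => z ^ k) ⁻¹' A) =
          (fun (x : ℕ → Fin k) (n : ℕ) => x (n + 1)) ⁻¹' (f ⁻¹' A)) := by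
  have : NeZero k := ⟨by omega⟩
  obtain rfl : f = Circle.ofDigits := by
    ext1 x
    simp only [hf, Circle.ofDigits_eq_exp, Real.ofDigits, Real.ofDigitsTerm, inv_pow]
  refine ⟨Circle.measurePreserving_ofDigits hP hk μ,
    ⟨(Circle.digits · k), Circle.measurable_digits, ?_, .of_forall (Circle.ofDigits_digits hk)⟩,
    Circle.ofDigits_pow, fun A _ ↦ ?_⟩
  · filter_upwards [IsUniformBernoulli.ae_frequently_lt hP hk] with x hx
    exact Circle.digits_ofDigits hx
  · ext x
    simp only [mem_preimage, Circle.ofDigits_pow]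
end

section
/- Let T be a mixing measure-preserving transformation of a probability space (X, μ), let ε > 0, and let A ⊆ X be measurable with 0 < μ(A) < 1. Then for every m ∈ ℕ there exist positive integers l_1, …, l_m such that μ(⋃_{i=1}^m T^{-l_i}(A)) > 1 − ε − (1 − μ(A))^m. -/
open MeasureTheory Filter Topology

/-! Mixing lets each new iterate `T^{-l} Aᶜ` be chosen almost independent of the intersection
of the previous ones, so by induction `μ (⋂ᵢ T^{-lᵢ} Aᶜ)` can be pushed below
`(1 - μ A) ^ m + ε`; the union of the `T^{-lᵢ} A` is the complement of that intersection. -/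

def IsMixing {X : Type*} [MeasurableSpace X] (μ : Measure X) (T : X → X) : Prop :=
  ∀ A B : Set X, MeasurableSet A → MeasurableSet B →
    Tendsto (fun l : ℕ => μ.real (T^[l] ⁻¹' A ∩ B)) atTop (𝓝 (μ.real A * μ.real B))

namespace IsMixing

variable {X : Type*} [MeasurableSpace X] {μ : Measure X} {T : X → X}

theorem exists_pos_measureReal_preimage_inter_lt (h : IsMixing μ T) {A B : Set X}
    (hA : MeasurableSet A) (hB : MeasurableSet B) {c : ℝ} (hc : μ.real A * μ.real B < c) :
    ∃ n, 0 < n ∧ μ.real (T^[n] ⁻¹' A ∩ B) < c :=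
  ((eventually_gt_atTop 0).and ((h A B hA hB).eventually (gt_mem_nhds hc))).exists

theorem exists_pos_measureReal_iInter_preimage_lt [IsProbabilityMeasure μ] (h : IsMixing μ T)
    (hT : Measurable T) {A : Set X} (hA : MeasurableSet A) (m : ℕ) {δ : ℝ} (hδ : 0 < δ) :
    ∃ l : Fin m → ℕ, (∀ i, 0 < l i) ∧ μ.real (⋂ i, T^[l i] ⁻¹' A) < μ.real A ^ m + δ := by
  induction m generalizing δ with
  | zero => exact ⟨Fin.elim0, fun i => i.elim0, by simpa⟩
  | succ m ih =>
    obtain ⟨l, hl_pos, hl⟩ := ih (half_pos hδ)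
    set B := ⋂ i, T^[l i] ⁻¹' A
    have hB : MeasurableSet B := .iInter fun i => hT.iterate (l i) hA
    have hbound : μ.real A * μ.real B < μ.real A ^ (m + 1) + δ := calc
      μ.real A * μ.real B ≤ μ.real A * (μ.real A ^ m + δ / 2) := by gcongr
      _ ≤ μ.real A ^ (m + 1) + δ / 2 := by
        rw [mul_add, pow_succ']
        gcongr
        exact mul_le_of_le_one_left (by positivity) measureReal_le_one
      _ < μ.real A ^ (m + 1) + δ := by linarith
    obtain ⟨n, hn_pos, hn⟩ := h.exists_pos_measureReal_preimage_inter_lt hA hB hbound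
    refine ⟨Fin.cons n l, Fin.forall_fin_succ.2 ⟨hn_pos, hl_pos⟩, ?_⟩
    have hcons : ⋂ i, T^[(Fin.cons n l : Fin (m + 1) → ℕ) i] ⁻¹' A = T^[n] ⁻¹' A ∩ B := by
      ext x
      simp [B, Fin.forall_fin_succ]
    rwa [hcons]

end IsMixing

theorem exists_iterates_union_large_of_mixing_general
    {X : Type*} [MeasurableSpace X] (μ : Measure X) [IsProbabilityMeasure μ]
    (T : X → X) (hT : MeasurePreserving T μ μ)
    (hmix : ∀ A B : Set X, MeasurableSet A → MeasurableSet B →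
      Tendsto (fun l : ℕ => (μ ((T^[l]) ⁻¹' A ∩ B)).toReal) atTop
        (nhds ((μ A).toReal * (μ B).toReal)))
    (ε : ℝ) (hε : 0 < ε)
    (A : Set X) (hA : MeasurableSet A) :
    ∀ m : ℕ, ∃ l : Fin m → ℕ, (∀ i, 0 < l i) ∧
      (μ (⋃ i : Fin m, (T^[l i]) ⁻¹' A)).toReal >
        1 - ε - (1 - (μ A).toReal) ^ m := by
  intro m
  obtain ⟨l, hl_pos, hl⟩ :=
    IsMixing.exists_pos_measureReal_iInter_preimage_lt hmix hT.measurable hA.compl m hε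
  refine ⟨l, hl_pos, ?_⟩
  have hU : MeasurableSet (⋃ i, T^[l i] ⁻¹' A) := .iUnion fun i => hT.measurable.iterate _ hA
  have hcompl := probReal_compl_eq_one_sub (μ := μ) hU
  simp only [Set.compl_iUnion, ← Set.preimage_compl] at hcompl
  rw [probReal_compl_eq_one_sub hA] at hl
  change μ.real _ > 1 - ε - (1 - μ.real A) ^ m
  linarith

/-- If `T` is a mixing measure-preserving transformation of a probability space `(X, μ)`,
`ε > 0`, and `A` is measurable with `0 < μ A < 1`, then for every `m` there exist
positive integers `l₁, …, l_m` with `μ (⋃ i, T^{-lᵢ} A) > 1 - ε - (1 - μ A) ^ m`. -/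
theorem exists_iterates_union_large_of_mixing
    {X : Type*} [MeasurableSpace X] (μ : Measure X) [IsProbabilityMeasure μ]
    (T : X → X) (hT : MeasurePreserving T μ μ)
    (hmix : ∀ A B : Set X, MeasurableSet A → MeasurableSet B →
      Tendsto (fun l : ℕ => (μ ((T^[l]) ⁻¹' A ∩ B)).toReal) atTop
        (nhds ((μ A).toReal * (μ B).toReal)))
    (ε : ℝ) (hε : 0 < ε)
    (A : Set X) (hA : MeasurableSet A) (hA0 : 0 < μ A) (hA1 : μ A < 1) :
    ∀ m : ℕ, ∃ l : Fin m → ℕ, (∀ i, 0 < l i) ∧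
      (μ (⋃ i : Fin m, (T^[l i]) ⁻¹' A)).toReal >
        1 - ε - (1 - (μ A).toReal) ^ m :=
  exists_iterates_union_large_of_mixing_general μ T hT hmix ε hε A hA
end

section
/- Let p, q be non-zero integers with |p| ≠ |q|, and for n ∈ ℕ set u_n = Σ_{i,j=1}^n e(p^i q^j) in ℓ²(ℤ), where e(m) denotes the standard basis vector at m ∈ ℤ; set v_n = u_n / ‖u_n‖₂. Let σ_k : ℓ²(ℤ) → ℓ²(ℤ) be the isometry induced by e(m) ↦ e(km) for a non-zero integer k. Then for k = p and k = q, ‖σ_k(v_n) − v_n‖₂ → 0 as n → ∞. -/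
/-!
Write `u_n = ∑_{i<n} σ_p^i w_n` with the row `w_n = ∑_j e(p q^j)`. As `σ_p` is an isometry,
`σ_p u_n - u_n = σ_p^n w_n - w_n` has norm at most `2‖w_n‖`, while the rows `σ_p^i w_n`, being
sums of basis vectors, have pairwise nonnegative inner products, so `‖u_n‖² ≥ n ‖w_n‖²`.
Hence `‖σ_p v_n - v_n‖ ≤ 2/√n`; exchanging `p` and `q` gives the claim for `σ_q`.
-/

open Filter Finset RCLike

section InnerProductSpace

variable {𝕜 E ι : Type*} [RCLike 𝕜] [NormedAddCommGroup E] [InnerProductSpace 𝕜 E]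

theorem sum_norm_sq_le_norm_sum_sq (s : Finset ι) (g : ι → E)
    (hg : ∀ i ∈ s, ∀ j ∈ s, 0 ≤ re (inner 𝕜 (g i) (g j))) :
    ∑ i ∈ s, ‖g i‖ ^ 2 ≤ ‖∑ i ∈ s, g i‖ ^ 2 := by
  rw [@norm_sq_eq_re_inner 𝕜, sum_inner, map_sum]
  refine sum_le_sum fun i hi => ?_
  rw [inner_sum, map_sum, @norm_sq_eq_re_inner 𝕜]
  exact single_le_sum (f := fun j => re (inner 𝕜 (g i) (g j))) (hg i hi) hi

theorem sqrt_mul_norm_map_sub_le_of_re_inner_iterate_nonneg (σ : E →ₗᵢ[𝕜] E) (w : E)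
    (hw : ∀ i j : ℕ, 0 ≤ re (inner 𝕜 (σ^[i] w) (σ^[j] w))) (n : ℕ) :
    √n * ‖σ (∑ i ∈ range n, σ^[i] w) - ∑ i ∈ range n, σ^[i] w‖
      ≤ 2 * ‖∑ i ∈ range n, σ^[i] w‖ := by
  set u := ∑ i ∈ range n, σ^[i] w
  have hnorm : ∀ i, ‖σ^[i] w‖ = ‖w‖ := fun i => by
    induction i with
    | zero => rfl
    | succ i ih => rw [Function.iterate_succ_apply', σ.norm_map, ih]
  have htelescope : σ u - u = σ^[n] w - w := by
    simp only [u, map_sum, ← Function.iterate_succ_apply' σ, ← sum_sub_distrib]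
    exact sum_range_sub (fun i => σ^[i] w) n
  have hsub : ‖σ u - u‖ ≤ 2 * ‖w‖ :=
    calc ‖σ u - u‖ ≤ ‖σ^[n] w‖ + ‖w‖ := htelescope ▸ norm_sub_le _ _
      _ = 2 * ‖w‖ := by rw [hnorm, two_mul]
  have hsq : (√n * ‖w‖) ^ 2 ≤ ‖u‖ ^ 2 := by
    have := sum_norm_sq_le_norm_sum_sq (range n) (fun i => σ^[i] w) fun i _ j _ => hw i j
    simpa [hnorm, mul_pow] using this
  have hw_le : √n * ‖w‖ ≤ ‖u‖ :=
    (pow_le_pow_iff_left₀ (by positivity) (norm_nonneg u) two_ne_zero).mp hsq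
  calc √n * ‖σ u - u‖ ≤ √n * (2 * ‖w‖) := by gcongr
    _ ≤ 2 * ‖u‖ := by linarith

end InnerProductSpace

theorem Finset.sum_Icc_one_eq_sum_range {α : Type*} [AddCommMonoid α] (f : ℕ → α) (n : ℕ) :
    ∑ i ∈ Icc 1 n, f i = ∑ i ∈ range n, f (i + 1) := by
  rw [range_eq_Ico, sum_Ico_add']
  rfl

section Lp

variable {𝕜 M ι : Type*} [RCLike 𝕜] [DecidableEq M]

local notation "ℓ²" => lp (fun _ : M => 𝕜) 2

theorem lp.re_inner_sum_single_one_nonneg (s t : Finset ι) (f g : ι → M) :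
    0 ≤ re (inner 𝕜 (∑ x ∈ s, (lp.single 2 (f x) 1 : ℓ²))
      (∑ y ∈ t, (lp.single 2 (g y) 1 : ℓ²))) := by
  simp only [sum_inner, inner_sum, map_sum, lp.inner_single_left, lp.single_apply, Pi.single_apply]
  refine sum_nonneg fun x _ => sum_nonneg fun y _ => ?_
  split_ifs <;> simp

theorem iterate_sum_single_one [Monoid M] (σ : ℓ² →ₗᵢ[𝕜] ℓ²) (p : M)
    (hσ : ∀ m, σ (lp.single 2 m 1) = lp.single 2 (p * m) 1) (s : Finset ι) (f : ι → M) (i : ℕ) :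
    σ^[i] (∑ x ∈ s, lp.single 2 (f x) 1) = ∑ x ∈ s, (lp.single 2 (p ^ i * f x) 1 : ℓ²) := by
  induction i with
  | zero => simp
  | succ i ih => simp only [Function.iterate_succ_apply', ih, map_sum, hσ, ← mul_assoc, pow_succ']

theorem tendsto_norm_map_inv_norm_smul_sub [Monoid M] (σ : ℓ² →ₗᵢ[𝕜] ℓ²) (p q : M)
    (hσ : ∀ m, σ (lp.single 2 m 1) = lp.single 2 (p * m) 1) (u : ℕ → ℓ²)
    (hu : ∀ n, u n = ∑ ij ∈ Icc 1 n ×ˢ Icc 1 n, lp.single 2 (p ^ ij.1 * q ^ ij.2) 1) :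
    Tendsto (fun n => ‖σ (‖u n‖⁻¹ • u n) - ‖u n‖⁻¹ • u n‖) atTop (nhds 0) := by
  have hbound : ∀ n : ℕ, √n * ‖σ (u n) - u n‖ ≤ 2 * ‖u n‖ := fun n => by
    have hrows : u n = ∑ i ∈ range n, σ^[i] (∑ j ∈ Icc 1 n, lp.single 2 (p * q ^ j) 1) := by
      rw [hu, sum_product, sum_Icc_one_eq_sum_range]
      simp only [iterate_sum_single_one σ p hσ, ← mul_assoc, ← pow_succ]
    rw [hrows]
    refine sqrt_mul_norm_map_sub_le_of_re_inner_iterate_nonneg σ _ (fun i j => ?_) n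
    simp only [iterate_sum_single_one σ p hσ]
    exact lp.re_inner_sum_single_one_nonneg _ _ _ _
  have hnormalize : ∀ n, ‖σ (‖u n‖⁻¹ • u n) - ‖u n‖⁻¹ • u n‖ = ‖u n‖⁻¹ * ‖σ (u n) - u n‖ :=
    fun n => by
      rw [RCLike.real_smul_eq_coe_smul (K := 𝕜), map_smul, ← smul_sub, norm_smul,
        RCLike.norm_ofReal, abs_inv, abs_norm]
  have hlim : Tendsto (fun n : ℕ => 2 / √n) atTop (nhds 0) :=
    tendsto_const_nhds.div_atTop (Real.tendsto_sqrt_atTop.comp tendsto_natCast_atTop_atTop)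
  refine squeeze_zero' (Eventually.of_forall fun n => norm_nonneg _) ?_ hlim
  filter_upwards [eventually_gt_atTop 0] with n hn
  rw [hnormalize, le_div_iff₀ (by positivity)]
  calc ‖u n‖⁻¹ * ‖σ (u n) - u n‖ * √n = ‖u n‖⁻¹ * (√n * ‖σ (u n) - u n‖) := by ring
    _ ≤ ‖u n‖⁻¹ * (2 * ‖u n‖) := mul_le_mul_of_nonneg_left (hbound n) (by positivity)
    _ = 2 * (‖u n‖⁻¹ * ‖u n‖) := by ring
    _ ≤ 2 := mul_le_of_le_one_right zero_le_two inv_mul_le_one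

end Lp

theorem almost_invariant_vectors_in_l2_general
    (p q : ℤ)
    (e : ℤ → lp (fun _ : ℤ => ℂ) 2) (he : e = fun m => lp.single 2 m (1 : ℂ))
    (σp σq : lp (fun _ : ℤ => ℂ) 2 →ₗᵢ[ℂ] lp (fun _ : ℤ => ℂ) 2)
    (hσp : ∀ m : ℤ, σp (e m) = e (p * m))
    (hσq : ∀ m : ℤ, σq (e m) = e (q * m))
    (u : ℕ → lp (fun _ : ℤ => ℂ) 2)
    (hu : u = fun n => ∑ ij ∈ Finset.Icc 1 n ×ˢ Finset.Icc 1 n, e (p ^ ij.1 * q ^ ij.2))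
    (v : ℕ → lp (fun _ : ℤ => ℂ) 2)
    (hv : v = fun n => (‖u n‖)⁻¹ • u n) :
    Tendsto (fun n => ‖σp (v n) - v n‖) atTop (nhds 0) ∧
      Tendsto (fun n => ‖σq (v n) - v n‖) atTop (nhds 0) := by
  subst he hv
  have hu_swap : ∀ n, u n = ∑ ij ∈ Icc 1 n ×ˢ Icc 1 n, lp.single 2 (q ^ ij.1 * p ^ ij.2) 1 := by
    intro n
    simp only [hu]
    rw [sum_product, sum_product_right]
    simp only [mul_comm]
  exact ⟨tendsto_norm_map_inv_norm_smul_sub σp p q hσp u (congrFun hu),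
    tendsto_norm_map_inv_norm_smul_sub σq q p hσq u hu_swap⟩

/-- In `ℓ²(ℤ)` with standard basis `(e(m))`, set `u_n = ∑_{i,j=1}^n e(p^i q^j)` and
`v_n = u_n / ‖u_n‖`, where `p, q` are non-zero integers with `|p| ≠ |q|`. If `σ_k` is
the isometry with `σ_k(e(m)) = e(k m)`, then `‖σ_k(v_n) − v_n‖ → 0` for `k = p, q`. -/
theorem almost_invariant_vectors_in_l2
    (p q : ℤ) (hp : p ≠ 0) (hq : q ≠ 0) (hpq : |p| ≠ |q|)
    (e : ℤ → lp (fun _ : ℤ => ℂ) 2) (he : e = fun m => lp.single 2 m (1 : ℂ))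
    (σp σq : lp (fun _ : ℤ => ℂ) 2 →ₗᵢ[ℂ] lp (fun _ : ℤ => ℂ) 2)
    (hσp : ∀ m : ℤ, σp (e m) = e (p * m))
    (hσq : ∀ m : ℤ, σq (e m) = e (q * m))
    (u : ℕ → lp (fun _ : ℤ => ℂ) 2)
    (hu : u = fun n => ∑ ij ∈ Finset.Icc 1 n ×ˢ Finset.Icc 1 n, e (p ^ ij.1 * q ^ ij.2))
    (v : ℕ → lp (fun _ : ℤ => ℂ) 2)
    (hv : v = fun n => (‖u n‖)⁻¹ • u n) :
    Tendsto (fun n => ‖σp (v n) - v n‖) atTop (nhds 0) ∧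
      Tendsto (fun n => ‖σq (v n) - v n‖) atTop (nhds 0) :=
  almost_invariant_vectors_in_l2_general p q e he σp σq hσp hσq u hu v hv
end
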